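/- arXiv:2402.06708 — 6 statements merged into one kernel-verified Lean document; each statement's English description precedes it below -/
import Mathlib

section
/- For any positive integers n and s with s ≥ 1, n ≥ 1, there are (up to isomorphism) only finitely many finite groups G possessing a normal subgroup N with index |G:N| = n such that N contains exactly s non-central G-conjugacy classes. -/
/-!
Dividing the class equation of `N` (for the conjugation action of `G`) by `|G|` gives
`1/n = 1/|G : Z(G) ∩ N| + ∑ᵢ 1/|C_G(xᵢ)|`, a representation of `1/n` by `s + 1` unit fractions.
By Landau's argument the denominators of such representations are bounded in terms of `n` and
`s` alone, say by `B`. Since `Z(G) ∩ N ≤ C_G(x₁)`, this gives `|G| ≤ B²`, and there are only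
finitely many groups of bounded order.
-/

universe u

theorem Nat.cast_inv_eq_div_of_mul_eq {K : Type*} [Field K] [CharZero K] {a b c : ℕ}
    (h : a * b = c) (hc : c ≠ 0) : (a : K)⁻¹ = b / c := by
  subst h
  have ha : a ≠ 0 := left_ne_zero_of_mul hc
  have hb : b ≠ 0 := right_ne_zero_of_mul hc
  push_cast
  field_simp

theorem Multiset.exists_mem_mul_sum_inv_le_card {m : Multiset ℕ} (hm : m ≠ 0)
    (hpos : ∀ x ∈ m, 0 < x) :
    ∃ v ∈ m, (v : ℚ) * (m.map fun x : ℕ => (x : ℚ)⁻¹).sum ≤ Multiset.card m := by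
  obtain ⟨v, hv, hmin⟩ := m.toFinset.exists_min_image id (Multiset.toFinset_nonempty.mpr hm)
  rw [Multiset.mem_toFinset] at hv
  have hv0 : (0 : ℚ) < v := by exact_mod_cast hpos v hv
  have hsum : (m.map fun x : ℕ => (x : ℚ)⁻¹).sum ≤ Multiset.card m * (v : ℚ)⁻¹ := by
    have hle : ∀ y ∈ m.map fun x : ℕ => (x : ℚ)⁻¹, y ≤ (v : ℚ)⁻¹ := by
      intro y hy
      obtain ⟨x, hx, rfl⟩ := Multiset.mem_map.mp hy
      have hvx : v ≤ x := hmin x (Multiset.mem_toFinset.mpr hx)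
      exact inv_anti₀ hv0 (by exact_mod_cast hvx)
    simpa using Multiset.sum_le_card_nsmul _ _ hle
  refine ⟨v, hv, ?_⟩
  calc (v : ℚ) * (m.map fun x : ℕ => (x : ℚ)⁻¹).sum ≤ v * (Multiset.card m * (v : ℚ)⁻¹) := by
        gcongr
    _ = Multiset.card m := by field_simp

/-- Landau: the smallest denominator `v` satisfies `v ≤ k / r`, and the remaining `k - 1` unit
fractions sum to `r - 1/v`, so induction on `k` over the finitely many possible `v` applies. -/
theorem exists_bound_of_sum_inv_eq (k : ℕ) (r : ℚ) :
    ∃ B : ℕ, ∀ m : Multiset ℕ, Multiset.card m = k → (∀ x ∈ m, 0 < x) →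
      (m.map fun x : ℕ => (x : ℚ)⁻¹).sum = r → ∀ x ∈ m, x ≤ B := by
  induction k generalizing r with
  | zero => exact ⟨0, fun m hk _ _ x hx => by simp_all⟩
  | succ k ih =>
    choose B hB using ih
    refine ⟨(Finset.range (⌈(k + 1 : ℚ) / r⌉₊ + 1)).sup fun v => max v (B (r - (v : ℚ)⁻¹)), ?_⟩
    intro m hk hpos hsum x hx
    obtain ⟨v, hvm, hv⟩ := m.exists_mem_mul_sum_inv_le_card (by rintro rfl; simp at hk) hpos
    obtain ⟨m', rfl⟩ := Multiset.exists_cons_of_mem hvm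
    have hv0 : (0 : ℚ) < v := by exact_mod_cast hpos v hvm
    have hsum' : (m'.map fun x : ℕ => (x : ℚ)⁻¹).sum = r - (v : ℚ)⁻¹ := by
      simp only [Multiset.map_cons, Multiset.sum_cons] at hsum
      linarith
    have hr : 0 < r := by
      have : 0 ≤ (m'.map fun x : ℕ => (x : ℚ)⁻¹).sum :=
        Multiset.sum_nonneg fun _ hy => by
          obtain ⟨y, -, rfl⟩ := Multiset.mem_map.mp hy
          positivity
      linarith [inv_pos.mpr hv0]
    have hv_range : v ∈ Finset.range (⌈(k + 1 : ℚ) / r⌉₊ + 1) := by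
      rw [hsum, hk] at hv
      have : (v : ℚ) ≤ (k + 1 : ℚ) / r := by rw [le_div_iff₀ hr]; exact_mod_cast hv
      rw [Finset.mem_range, Nat.lt_succ_iff]
      exact_mod_cast this.trans (Nat.le_ceil _)
    refine le_trans ?_ (Finset.le_sup (f := fun v => max v (B (r - (v : ℚ)⁻¹))) hv_range)
    rcases Multiset.mem_cons.mp hx with rfl | hx
    · exact le_max_left _ _
    · refine (hB _ m' ?_ (fun y hy => hpos y (Multiset.mem_cons_of_mem hy)) hsum' x hx).trans
        (le_max_right _ _)
      simpa using hk

namespace Subgroup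

variable {G : Type*} [Group G]

theorem index_centralizer_singleton (x : G) :
    (centralizer {x}).index = (conjugatesOf x).ncard := by
  rw [centralizer_eq_comap_stabilizer]
  refine (index_comap_of_surjective _ ConjAct.toConjAct.surjective).trans ?_
  rw [MulAction.index_stabilizer]
  congr 1
  ext y
  exact ConjAct.mem_orbit_conjAct.trans isConj_comm

theorem ncard_conjugatesOf_mul_card_centralizer (x : G) :
    (conjugatesOf x).ncard * Nat.card (centralizer {x}) = Nat.card G := by
  rw [← index_centralizer_singleton, index_mul_card]

theorem card_div_ncard_conjugatesOf [Finite G] (x : G) :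
    Nat.card G / (conjugatesOf x).ncard = Nat.card (centralizer {x}) := by
  refine Nat.div_eq_of_eq_mul_right ?_ (ncard_conjugatesOf_mul_card_centralizer x).symm
  rw [← index_centralizer_singleton]
  exact Nat.pos_of_ne_zero index_ne_zero_of_finite

def noncentralConjClasses (N : Subgroup G) : Set (Set G) :=
  {C | ∃ x : G, x ∈ N ∧ x ∉ center G ∧ C = conjugatesOf x}

theorem pairwiseDisjoint_noncentralConjClasses (N : Subgroup G) :
    N.noncentralConjClasses.PairwiseDisjoint id := by
  rintro _ ⟨x, -, -, rfl⟩ _ ⟨x', -, -, rfl⟩ hne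
  refine Set.disjoint_left.mpr fun y hy hy' => hne ?_
  exact (IsConj.trans hy (IsConj.symm hy')).conjugatesOf_eq

theorem coe_eq_center_inf_union_biUnion_noncentralConjClasses (N : Subgroup G) [N.Normal] :
    (N : Set G) = ↑(center G ⊓ N) ∪ ⋃ C ∈ N.noncentralConjClasses, C := by
  ext y
  simp only [Set.mem_union, Set.mem_iUnion, SetLike.mem_coe, mem_inf, exists_prop]
  constructor
  · intro hy
    by_cases hc : y ∈ center G
    · exact Or.inl ⟨hc, hy⟩
    · exact Or.inr ⟨conjugatesOf y, ⟨y, hy, hc, rfl⟩, mem_conjugatesOf_self⟩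
  · rintro (⟨-, hy⟩ | ⟨_, ⟨x, hx, -, rfl⟩, hy⟩)
    · exact hy
    · exact Group.conjugates_subset_normal hx hy

theorem disjoint_center_inf_biUnion_noncentralConjClasses (N : Subgroup G) :
    Disjoint (↑(center G ⊓ N) : Set G) (⋃ C ∈ N.noncentralConjClasses, C) := by
  refine Set.disjoint_left.mpr fun y hy hy' => ?_
  obtain ⟨_, ⟨x, -, hx, rfl⟩, hxy⟩ := Set.mem_iUnion₂.mp hy'
  exact hx ((IsConj.eq_of_right_mem_center hxy hy.1) ▸ hy.1)

theorem card_center_inf_add_finsum_ncard_noncentralConjClasses [Finite G] (N : Subgroup G)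
    [N.Normal] :
    Nat.card (center G ⊓ N : Subgroup G) + ∑ᶠ C ∈ N.noncentralConjClasses, C.ncard =
      Nat.card N := by
  rw [← SetLike.coe_sort_coe, ← SetLike.coe_sort_coe N, Nat.card_coe_set_eq, Nat.card_coe_set_eq,
    coe_eq_center_inf_union_biUnion_noncentralConjClasses N,
    Set.ncard_union_eq (disjoint_center_inf_biUnion_noncentralConjClasses N)]
  congr 1
  exact ((Set.toFinite _).ncard_biUnion (s := id) (fun _ _ => Set.toFinite _)
    (pairwiseDisjoint_noncentralConjClasses N)).symm

section ClassEquationDenominators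

variable [Finite G]

/-- The denominators `|G : Z(G) ∩ N|` and `|C_G(x)| = |G| / |x^G|`, one for each noncentral class
`x^G ⊆ N`, of the class equation of `N` divided by `|G|`. -/
noncomputable def classEquationDenominators (N : Subgroup G) : Multiset ℕ :=
  (center G ⊓ N).index ::ₘ
    (Set.toFinite N.noncentralConjClasses).toFinset.val.map fun C => Nat.card G / C.ncard

theorem card_classEquationDenominators (N : Subgroup G) :
    Multiset.card N.classEquationDenominators = N.noncentralConjClasses.ncard + 1 := by
  rw [classEquationDenominators, Multiset.card_cons, Multiset.card_map,
    Set.ncard_eq_toFinset_card _ (Set.toFinite _)]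
  rfl

theorem pos_of_mem_classEquationDenominators {N : Subgroup G} {d : ℕ}
    (hd : d ∈ N.classEquationDenominators) : 0 < d := by
  rcases Multiset.mem_cons.mp hd with rfl | hd
  · exact Nat.pos_of_ne_zero index_ne_zero_of_finite
  · obtain ⟨C, hC, rfl⟩ := Multiset.mem_map.mp hd
    obtain ⟨x, -, -, rfl⟩ := (Set.Finite.mem_toFinset _).mp hC
    rw [card_div_ncard_conjugatesOf]
    exact Nat.card_pos

theorem card_centralizer_mem_classEquationDenominators {N : Subgroup G} {x : G} (hxN : x ∈ N)
    (hx : x ∉ center G) : Nat.card (centralizer {x}) ∈ N.classEquationDenominators := by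
  rw [← card_div_ncard_conjugatesOf]
  refine Multiset.mem_cons_of_mem (Multiset.mem_map_of_mem _ ?_)
  exact (Set.Finite.mem_toFinset _).mpr ⟨x, hxN, hx, rfl⟩

theorem sum_inv_classEquationDenominators (N : Subgroup G) [N.Normal] :
    (N.classEquationDenominators.map fun d : ℕ => (d : ℚ)⁻¹).sum = (N.index : ℚ)⁻¹ := by
  have hG : Nat.card G ≠ 0 := Nat.card_pos.ne'
  have hclass : ∀ C ∈ (Set.toFinite N.noncentralConjClasses).toFinset,
      ((Nat.card G / C.ncard : ℕ) : ℚ)⁻¹ = C.ncard / Nat.card G := by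
    intro C hC
    obtain ⟨x, -, -, rfl⟩ := (Set.Finite.mem_toFinset _).mp hC
    rw [card_div_ncard_conjugatesOf]
    exact Nat.cast_inv_eq_div_of_mul_eq
      ((mul_comm _ _).trans (ncard_conjugatesOf_mul_card_centralizer x)) hG
  rw [classEquationDenominators, Multiset.map_cons, Multiset.sum_cons, Multiset.map_map]
  change _ + ∑ C ∈ (Set.toFinite N.noncentralConjClasses).toFinset,
    ((Nat.card G / C.ncard : ℕ) : ℚ)⁻¹ = _
  rw [Finset.sum_congr rfl hclass, ← Finset.sum_div,
    Nat.cast_inv_eq_div_of_mul_eq (index_mul_card _) hG,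
    Nat.cast_inv_eq_div_of_mul_eq (index_mul_card N) hG, ← add_div,
    ← card_center_inf_add_finsum_ncard_noncentralConjClasses N,
    finsum_mem_eq_finite_toFinset_sum _ (Set.toFinite _)]
  push_cast
  rfl

end ClassEquationDenominators

end Subgroup

theorem exists_finite_family_mulEquiv_of_card_le (B : ℕ) :
    ∃ (ι : Type) (_ : Finite ι) (H : ι → GrpCat.{u}),
      ∀ (G : Type) [Group G] [Finite G], Nat.card G ≤ B → ∃ i, Nonempty (G ≃* H i) := by
  refine ⟨Σ m : Fin (B + 1), Subgroup (Equiv.Perm (Fin m)), inferInstance,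
    fun i => GrpCat.of (ULift i.2), fun G _ _ hG => ?_⟩
  let cayley : G →* Equiv.Perm (Fin (Nat.card G)) :=
    (Equiv.permCongrHom (Finite.equivFin G)).toMonoidHom.comp (MulAction.toPermHom G G)
  have hcayley : Function.Injective cayley :=
    (Equiv.permCongrHom _).injective.comp MulAction.toPerm_injective
  exact ⟨⟨⟨Nat.card G, by omega⟩, cayley.range⟩,
    ⟨(MonoidHom.ofInjective hcayley).trans MulEquiv.ulift.symm⟩⟩

theorem finitely_many_groups_with_normal_subgroup_few_noncentral_classes_general
    (n s : ℕ) (hs : 1 ≤ s) :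
    ∃ (ι : Type) (_ : Finite ι) (H : ι → GrpCat),
      ∀ (G : Type) [Group G] [Finite G] (N : Subgroup G), N.Normal →
        N.index = n →
        {C : Set G | ∃ x : G, x ∈ N ∧ x ∉ Subgroup.center G ∧ C = conjugatesOf x}.ncard = s →
        ∃ i, Nonempty (G ≃* H i) := by
  obtain ⟨B, hB⟩ := exists_bound_of_sum_inv_eq (s + 1) (n : ℚ)⁻¹
  obtain ⟨ι, hι, H, hH⟩ := exists_finite_family_mulEquiv_of_card_le (B * B)
  refine ⟨ι, hι, H, fun G _ _ N hN hidx hS => hH G ?_⟩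
  have hS : N.noncentralConjClasses.ncard = s := hS
  have hden : ∀ d ∈ N.classEquationDenominators, d ≤ B :=
    hB _ (by rw [N.card_classEquationDenominators, hS])
      (fun _ => Subgroup.pos_of_mem_classEquationDenominators)
      (by rw [N.sum_inv_classEquationDenominators, hidx])
  obtain ⟨_, x, hxN, hx, rfl⟩ :=
    Set.nonempty_of_ncard_ne_zero (s := N.noncentralConjClasses) (by omega)
  have hZ : Subgroup.center G ⊓ N ≤ Subgroup.centralizer {x} :=
    inf_le_left.trans (Subgroup.center_le_centralizer _)
  calc Nat.card G = (Subgroup.center G ⊓ N).index * Nat.card (Subgroup.center G ⊓ N : Subgroup G) :=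
        (Subgroup.index_mul_card _).symm
    _ ≤ B * Nat.card (Subgroup.centralizer {x}) :=
        Nat.mul_le_mul (hden _ (Multiset.mem_cons_self _ _)) (Subgroup.card_le_of_le hZ)
    _ ≤ B * B := Nat.mul_le_mul_left _
        (hden _ (Subgroup.card_centralizer_mem_classEquationDenominators hxN hx))

/-- For any positive integers `n` and `s`, there are (up to isomorphism)
only finitely many finite groups `G` possessing a normal subgroup `N` of index `n`
containing exactly `s` non-central `G`-conjugacy classes. -/
theorem finitely_many_groups_with_normal_subgroup_few_noncentral_classes
    (n s : ℕ) (hn : 1 ≤ n) (hs : 1 ≤ s) :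
    ∃ (ι : Type) (_ : Finite ι) (H : ι → GrpCat),
      ∀ (G : Type) [Group G] [Finite G] (N : Subgroup G), N.Normal →
        N.index = n →
        {C : Set G | ∃ x : G, x ∈ N ∧ x ∉ Subgroup.center G ∧ C = conjugatesOf x}.ncard = s →
        ∃ i, Nonempty (G ≃* H i) :=
  finitely_many_groups_with_normal_subgroup_few_noncentral_classes_general n s hs
end

section
/- Let s, n be positive integers and let n₁, …, n_{s+1} be positive integers with n₁ ≤ n₂ ≤ … ≤ n_{s+1} satisfying 1/n = 1/n₁ + 1/n₂ + … + 1/n_{s+1}. Then for every k with 2 ≤ k ≤ s+1, n_k ≤ n^(2^(k-1)) · (s+2-k) · ∏_{i=0}^{k-2} (s+1-i)^(2^(k-2-i)). -/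
/-!
The tail `T = 1/n - ∑_{i<j} 1/n_i = ∑_{i≥j} 1/n_i` is positive, and `n ∏_{i<j} n_i · T` is an
integer, so `T ≥ 1 / (n ∏_{i<j} n_i)`. By monotonicity `T ≤ (s+1-j) / n_j`, whence
`n_j ≤ (s+1-j) · n · ∏_{i<j} n_i`. The bound of the theorem is the closed form of this recursion,
so it follows by strong induction on `j`.
-/

open Finset

theorem exists_int_eq_mul_prod_mul_one_div_sub_sum {K ι : Type*} [Field K] [DecidableEq ι]
    (n : ℕ) (a : ι → ℕ) (S : Finset ι) :
    ∃ z : ℤ, ((n : K) * ∏ i ∈ S, (a i : K)) * (1 / n - ∑ i ∈ S, 1 / (a i : K)) = z := by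
  induction S using Finset.induction_on with
  | empty =>
    rcases eq_or_ne (n : K) 0 with hn | hn
    · exact ⟨0, by simp [hn]⟩
    · exact ⟨1, by simp [hn]⟩
  | insert j S hj ih =>
    obtain ⟨z, hz⟩ := ih
    rcases eq_or_ne (a j : K) 0 with h0 | h0
    · exact ⟨0, by simp [prod_insert hj, h0]⟩
    refine ⟨a j * z - n * ∏ i ∈ S, a i, ?_⟩
    rw [prod_insert hj, sum_insert hj]
    push_cast
    rw [← hz]
    field_simp
    ring

theorem le_card_mul_mul_prod_of_one_div_eq {ι : Type*} [DecidableEq ι] {n : ℕ} (hn : 1 ≤ n)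
    {a : ι → ℕ} {S R : Finset ι} (ha : ∀ i ∈ S ∪ R, 1 ≤ a i) (hSR : Disjoint S R)
    (heq : (1 : ℚ) / n = ∑ i ∈ S ∪ R, 1 / (a i : ℚ))
    {j : ι} (hj : j ∈ R) (hmin : ∀ i ∈ R, a j ≤ a i) :
    a j ≤ #R * n * ∏ i ∈ S, a i := by
  have ha' : ∀ i ∈ S ∪ R, (0 : ℚ) < a i := fun i hi => by exact_mod_cast ha i hi
  have haj := ha' j (mem_union_right S hj)
  set T := ∑ i ∈ R, 1 / (a i : ℚ)
  set D : ℚ := n * ∏ i ∈ S, (a i : ℚ) with hD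
  have hT : T = 1 / n - ∑ i ∈ S, 1 / (a i : ℚ) := by
    rw [heq, sum_union hSR]; ring
  have hT_pos : 0 < T := sum_pos (fun i hi => one_div_pos.2 (ha' i (mem_union_right S hi))) ⟨j, hj⟩
  have hD_pos : 0 < D :=
    mul_pos (by exact_mod_cast hn) (prod_pos fun i hi => ha' i (mem_union_left R hi))
  have hDT : 1 ≤ D * T := by
    obtain ⟨z, hz⟩ := exists_int_eq_mul_prod_mul_one_div_sub_sum (K := ℚ) n a S
    rw [← hT] at hz
    have hz_pos : 0 < z := Int.cast_pos.1 (hz ▸ mul_pos hD_pos hT_pos)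
    rw [hz]
    exact_mod_cast hz_pos
  have hT_le : T ≤ #R * (1 / (a j : ℚ)) := by
    rw [← nsmul_eq_mul]
    exact sum_le_card_nsmul R _ _ fun i hi =>
      one_div_le_one_div_of_le haj (by exact_mod_cast hmin i hi)
  have : (a j : ℚ) ≤ #R * D := calc
    (a j : ℚ) ≤ a j * (D * T) := le_mul_of_one_le_right haj.le hDT
    _ ≤ a j * (D * (#R * (1 / a j))) := by gcongr
    _ = #R * D := by field_simp
  rw [hD] at this
  rw [mul_assoc]
  exact_mod_cast this

def doublyExpBound {M : Type*} [CommMonoid M] (n : M) (c : ℕ → M) (j : ℕ) : M :=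
  n ^ 2 ^ j * c j * ∏ i ∈ range j, c i ^ 2 ^ (j - 1 - i)

section doublyExpBound

variable {M : Type*} [CommMonoid M] (n : M) (c : ℕ → M)

theorem prod_range_succ_pow_two_pow (j : ℕ) :
    ∏ i ∈ range (j + 1), c i ^ 2 ^ (j - i) = (∏ i ∈ range j, c i ^ 2 ^ (j - 1 - i)) ^ 2 * c j := by
  rw [prod_range_succ, ← prod_pow, Nat.sub_self, pow_zero, pow_one]
  congr 1
  refine prod_congr rfl fun i hi => ?_
  rw [← pow_mul, ← pow_succ]
  congr 2
  have := mem_range.1 hi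
  omega

theorem mul_prod_range_doublyExpBound (j : ℕ) :
    n * ∏ i ∈ range j, doublyExpBound n c i = n ^ 2 ^ j * ∏ i ∈ range j, c i ^ 2 ^ (j - 1 - i) := by
  induction j with
  | zero => simp
  | succ j ih =>
    rw [prod_range_succ, ← mul_assoc, ih, Nat.add_sub_cancel, prod_range_succ_pow_two_pow,
      doublyExpBound, pow_succ, pow_mul, sq, sq]
    ac_rfl

theorem mul_mul_prod_range_doublyExpBound (j : ℕ) :
    c j * n * ∏ i ∈ range j, doublyExpBound n c i = doublyExpBound n c j := by
  rw [mul_assoc, mul_prod_range_doublyExpBound, doublyExpBound, mul_left_comm, mul_assoc]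

end doublyExpBound

theorem Fin.le_doublyExpBound_of_one_div_eq_sum {N n : ℕ} (hn : 1 ≤ n) {m : Fin N → ℕ}
    (hm : ∀ i, 1 ≤ m i) (hmono : Monotone m) (heq : (1 : ℚ) / n = ∑ i, 1 / (m i : ℚ))
    (j : Fin N) : m j ≤ doublyExpBound n (fun i => N - i) j := by
  induction j using WellFoundedLT.induction with
  | ind j ih =>
  have hunion : Iio j ∪ Ici j = univ := by
    ext i; simpa using lt_or_ge i j
  have hdisj : Disjoint (Iio j) (Ici j) :=
    disjoint_left.2 fun i hi hi' => (mem_Ici.1 hi').not_gt (mem_Iio.1 hi)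
  calc m j ≤ #(Ici j) * n * ∏ i ∈ Iio j, m i :=
        le_card_mul_mul_prod_of_one_div_eq hn (fun i _ => hm i) hdisj (hunion ▸ heq)
          (mem_Ici.2 le_rfl) fun i hi => hmono (mem_Ici.1 hi)
    _ ≤ (N - j) * n * ∏ i ∈ Iio j, doublyExpBound n (fun i => N - i) i := by
        rw [Fin.card_Ici]
        gcongr with i hi
        exact ih i (mem_Iio.1 hi)
    _ = doublyExpBound n (fun i => N - i) j := by
        rw [← mul_mul_prod_range_doublyExpBound, ← Nat.Iio_eq_range, ← Fin.map_valEmbedding_Iio,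
          prod_map]
        rfl

/-- **Lemma 2.1, second part.** If `n₁ ≤ … ≤ n_{s+1}` are positive integers
with `1/n = 1/n₁ + ⋯ + 1/n_{s+1}`, then for every `2 ≤ k ≤ s+1`,
`n_k ≤ n^(2^(k-1)) * (s+2-k) * ∏_{i=0}^{k-2} (s+1-i)^(2^(k-2-i))`.
Here `n_k` is `m ⟨k-1, _⟩` (indices shifted to start at `0`). -/
theorem kth_term_le_of_unit_fraction_decomposition
    (s n : ℕ) (hn : 1 ≤ n)
    (m : Fin (s + 1) → ℕ) (hm : ∀ i, 1 ≤ m i) (hmono : Monotone m)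
    (heq : (1 : ℚ) / n = ∑ i, 1 / (m i : ℚ))
    (k : ℕ) (hk2 : 2 ≤ k) (hks : k ≤ s + 1) :
    m ⟨k - 1, by omega⟩ ≤
      n ^ 2 ^ (k - 1) * (s + 2 - k) * ∏ i ∈ Finset.range (k - 1), (s + 1 - i) ^ 2 ^ (k - 2 - i) := by
  have h := Fin.le_doublyExpBound_of_one_div_eq_sum hn hm hmono heq ⟨k - 1, by omega⟩
  rwa [doublyExpBound, show s + 1 - (k - 1) = s + 2 - k by omega, Nat.sub_sub] at h
end

section
/- Let G be a finite group and N a normal subgroup of G with |G:N| = n. If N contains exactly one non-central G-conjugacy class, then |G| < n(n+1)². -/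
/-- **Theorem 3.1.1.** If `N ⊴ G` has index `n` and contains exactly one
non-central `G`-conjugacy class, then `|G| < n(n+1)²`. -/
theorem card_lt_of_one_noncentral_class
    {G : Type*} [Group G] [Finite G] (N : Subgroup G) (hN : N.Normal)
    (n : ℕ) (hidx : N.index = n)
    (hcl : {C : Set G | ∃ x : G, x ∈ N ∧ x ∉ Subgroup.center G ∧ C = conjugatesOf x}.ncard = 1) :
    Nat.card G < n * (n + 1) ^ 2 := by
  classical
  -- extract the unique noncentral class
  rw [Set.ncard_eq_one] at hcl
  obtain ⟨C, hC⟩ := hcl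
  have hCmem : C ∈ {C : Set G | ∃ x : G, x ∈ N ∧ x ∉ Subgroup.center G ∧ C = conjugatesOf x} := by
    rw [hC]; exact rfl
  obtain ⟨x, hxN, hxZ, hCx⟩ := hCmem
  set K : Set G := conjugatesOf x with hK
  have key : ∀ y : G, y ∈ N → y ∉ Subgroup.center G → y ∈ K := by
    intro y hyN hyZ
    have : conjugatesOf y ∈ ({C} : Set (Set G)) := by
      rw [← hC]; exact ⟨y, hyN, hyZ, rfl⟩
    have h2 : conjugatesOf y = K := by rw [Set.mem_singleton_iff] at this; rw [this, hCx]
    rw [← h2]; exact mem_conjugatesOf_self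
  -- conjugates of x are noncentral elements of N
  have hKZ : ∀ y ∈ K, y ∉ Subgroup.center G := by
    intro y hy hyZ
    apply hxZ
    rw [hK, conjugatesOf, Set.mem_setOf_eq, isConj_iff] at hy
    obtain ⟨c, hc⟩ := hy
    have hcy : c * x * c⁻¹ = y := hc
    have : x = c⁻¹ * y * c := by rw [← hcy]; group
    have hyc := Subgroup.mem_center_iff.mp hyZ
    have hxy : x = y := by rw [this, hyc c⁻¹]; group
    rw [hxy]; exact hyZ
  have hKN : K ⊆ (N : Set G) := by
    intro y hy
    rw [hK, conjugatesOf, Set.mem_setOf_eq, isConj_iff] at hy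
    obtain ⟨c, hc⟩ := hy
    rw [← hc]
    exact hN.conj_mem x hxN c
  set ZN : Set G := (N : Set G) ∩ (Subgroup.center G : Set G) with hZN
  -- decomposition of N
  have hdecomp : (N : Set G) = ZN ∪ K := by
    apply Set.Subset.antisymm
    · intro y hy
      by_cases hyZ : y ∈ Subgroup.center G
      · exact Or.inl ⟨hy, hyZ⟩
      · exact Or.inr (key y hy hyZ)
    · rintro y (hy | hy)
      · exact hy.1
      · exact hKN hy
  have hdisj : Disjoint ZN K := by
    rw [Set.disjoint_left]
    rintro y ⟨-, hyZ⟩ hyK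
    exact hKZ y hyK hyZ
  set z : ℕ := ZN.ncard with hz
  set k : ℕ := K.ncard with hkdef
  set m : ℕ := Nat.card N with hm
  have hmzk : m = z + k := by
    have : (Nat.card N : ℕ) = ((N : Set G)).ncard := Nat.card_coe_set_eq (N : Set G)
    rw [hm, this, hdecomp, Set.ncard_union_eq hdisj (Set.toFinite _) (Set.toFinite _)]
  -- z ≤ k via the injection c ↦ x * c
  have himg : ((fun c => x * c) '' ZN) ⊆ K := by
    rintro - ⟨c, hc, rfl⟩
    apply key
    · exact N.mul_mem hxN hc.1
    · intro hmem
      apply hxZ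
      have hc' : c⁻¹ ∈ Subgroup.center G := (Subgroup.center G).inv_mem hc.2
      have : x = (x * c) * c⁻¹ := by group
      rw [this]
      exact (Subgroup.center G).mul_mem hmem hc'
  have hzk : z ≤ k := by
    have h1 : ((fun c => x * c) '' ZN).ncard = z := by
      rw [hz]; exact Set.ncard_image_of_injective _ (mul_right_injective x)
    rw [← h1]
    exact Set.ncard_le_ncard himg (Set.toFinite _)
  -- orbit-stabilizer
  set S := MulAction.stabilizer (ConjAct G) x with hS
  have horb : MulAction.orbit (ConjAct G) x = K := by
    ext y
    rw [ConjAct.mem_orbit_conjAct, hK, conjugatesOf, Set.mem_setOf_eq, isConj_comm]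
  have hos : k * Nat.card S = Nat.card G := by
    have e := Nat.card_congr (MulAction.orbitProdStabilizerEquivGroup (ConjAct G) x)
    rw [Nat.card_prod] at e
    have h1 : Nat.card (MulAction.orbit (ConjAct G) x) = k := by
      rw [horb]; exact Nat.card_coe_set_eq K
    have h2 : Nat.card (ConjAct G) = Nat.card G := Nat.card_congr ConjAct.ofConjAct.toEquiv
    rw [h1, h2] at e
    exact e
  -- the centralizer (stabilizer) has at least 2z elements
  haveI : Finite (ConjAct G) := Finite.of_equiv G ConjAct.toConjAct.toEquiv
  have hstab : 2 * z ≤ Nat.card S := by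
    set T1 : Set (ConjAct G) := ConjAct.toConjAct '' ZN with hT1
    set T2 : Set (ConjAct G) := ConjAct.toConjAct '' ((fun c => x * c) '' ZN) with hT2
    have hsub : T1 ∪ T2 ⊆ (S : Set (ConjAct G)) := by
      rintro - (⟨c, hc, rfl⟩ | ⟨-, ⟨c, hc, rfl⟩, rfl⟩)
      · show ConjAct.toConjAct c ∈ S
        rw [hS, MulAction.mem_stabilizer_iff, ConjAct.toConjAct_smul]
        have := (Subgroup.mem_center_iff.mp hc.2) x
        rw [← this]; group
      · show ConjAct.toConjAct (x * c) ∈ S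
        rw [hS, MulAction.mem_stabilizer_iff, ConjAct.toConjAct_smul]
        have hcx : c * x = x * c := ((Subgroup.mem_center_iff.mp hc.2) x).symm
        calc x * c * x * (x * c)⁻¹ = x * (c * x) * (x*c)⁻¹ := by group
          _ = x * (x * c) * (x * c)⁻¹ := by rw [hcx]
          _ = x := by group
    have hd12 : Disjoint T1 T2 := by
      rw [Set.disjoint_left]
      rintro - ⟨c, hc, rfl⟩ ⟨-, ⟨c', hc', rfl⟩, he⟩
      have he' : c = x * c' := (ConjAct.toConjAct.injective he).symm
      apply hxZ
      have hc'' : c'⁻¹ ∈ Subgroup.center G := (Subgroup.center G).inv_mem hc'.2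
      have : x = c * c'⁻¹ := by rw [he']; group
      rw [this]
      exact (Subgroup.center G).mul_mem hc.2 hc''
    have hc1 : T1.ncard = z := Set.ncard_image_of_injective _ ConjAct.toConjAct.injective
    have hc2 : T2.ncard = z := by
      rw [hT2, Set.ncard_image_of_injective _ ConjAct.toConjAct.injective,
        Set.ncard_image_of_injective _ (mul_right_injective x)]
    calc 2 * z = T1.ncard + T2.ncard := by rw [hc1, hc2]; ring
      _ = (T1 ∪ T2).ncard := (Set.ncard_union_eq hd12 (Set.toFinite _) (Set.toFinite _)).symm
      _ ≤ (S : Set (ConjAct G)).ncard := Set.ncard_le_ncard hsub (Set.toFinite _)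
      _ = Nat.card S := (Nat.card_coe_set_eq _).symm
  -- index and counting
  have hgnm : m * n = Nat.card G := by rw [hm, ← hidx]; exact Subgroup.card_mul_index N
  have hn1 : 1 ≤ n := by
    rcases Nat.eq_zero_or_pos n with h | h
    · exfalso; exact Subgroup.index_ne_zero_of_finite (hidx.trans h)
    · exact h
  have hz1 : 1 ≤ z := by
    have : (1 : G) ∈ ZN := ⟨N.one_mem, (Subgroup.center G).one_mem⟩
    have hne : ZN.Nonempty := ⟨1, this⟩
    exact (Set.ncard_pos (Set.toFinite _)).mpr hne
  have hk1 : 1 ≤ k := by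
    have hne : K.Nonempty := ⟨x, mem_conjugatesOf_self⟩
    exact (Set.ncard_pos (Set.toFinite _)).mpr hne
  -- k divides n * z
  have hkdvd : k ∣ n * z := by
    have h1 : k ∣ Nat.card G := ⟨Nat.card S, hos.symm⟩
    have h2 : Nat.card G = n * z + n * k := by
      rw [← hgnm, hmzk]; ring
    rw [h2] at h1
    exact (Nat.dvd_add_right ⟨n, mul_comm n k⟩).mp (by rwa [add_comm] at h1)
  have hknz : k ≤ n * z := Nat.le_of_dvd (by positivity) hkdvd
  -- 2 z k ≤ |G|
  have h2zk : 2 * z * k ≤ Nat.card G := by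
    calc 2 * z * k ≤ Nat.card S * k := by
          exact Nat.mul_le_mul_right k hstab
      _ = Nat.card G := by rw [mul_comm]; exact hos
  -- z ≤ n
  have hzn : z ≤ n := by
    by_contra hcon
    push_neg at hcon
    have hnk : n < k := lt_of_lt_of_le hcon hzk
    have hG : Nat.card G = n * z + n * k := by rw [← hgnm, hmzk]; ring
    rw [hG] at h2zk
    nlinarith
  -- conclude
  have hmle : m ≤ n + n * n := by
    rw [hmzk]
    have : k ≤ n * n := le_trans hknz (Nat.mul_le_mul_left n hzn)
    omega
  rw [← hgnm]
  nlinarith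
end

section
/- Let G be a finite group and N a normal subgroup of G with |G:N| = n. Suppose that N contains exactly two non-central G-conjugacy classes x₁^G and x₂^G, that |x₁^G| and |x₂^G| are coprime, and that Z(G) ∩ N = 1. Set n₁ = |C_G(x₁)| and n₂ = |C_G(x₂)| with n₁ < n₂. Then ⌊n·n₁/(n₁ − n)⌋ + 1 ≤ n₂ ≤ ⌊2n·n₁/(n₁ − n)⌋ − 1, where ⌊x⌋ denotes the integer part of x. -/
/-!
Since `Z(G) ∩ N = 1`, the group `N` is the disjoint union of `{1}`, `x₁^G` and `x₂^G`, so
`|N| = 1 + |G|/n₁ + |G|/n₂`; dividing by `|G|` gives `1/n = 1/|G| + 1/n₁ + 1/n₂`.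
Dropping `1/|G| > 0` yields the lower bound. For the upper bound, `x₂` is not central, so
`|G| ≥ 2 n₂` and `(n₁ - n)/(n n₁) = 1/|G| + 1/n₂ ≤ 3/(2 n₂) ≤ 2/(n₂ + 1)` as `n₂ ≥ 3`.
-/

open Subgroup

section Arithmetic

variable {K : Type*} [Field K] [LinearOrder K] [IsStrictOrderedRing K]

theorem lt_and_mul_div_sub_lt_of_inv_eq_inv_add_inv_add_inv {n n₁ n₂ g : K} (hn : 0 < n)
    (hn₁ : 0 < n₁) (hn₂ : 0 < n₂) (hg : 0 < g) (h : n⁻¹ = g⁻¹ + n₁⁻¹ + n₂⁻¹) :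
    n < n₁ ∧ n * n₁ / (n₁ - n) < n₂ := by
  have hsub : n₂⁻¹ < (n₁ - n) / (n * n₁) := by
    rw [← inv_sub_inv hn.ne' hn₁.ne']
    linarith [inv_pos.2 hg]
  have hpos : 0 < (n₁ - n) / (n * n₁) := (inv_pos.2 hn₂).trans hsub
  refine ⟨sub_pos.1 ((div_pos_iff_of_pos_right (by positivity)).1 hpos), ?_⟩
  rwa [← inv_div, inv_lt_comm₀ hpos hn₂]

theorem add_one_le_two_mul_mul_div_sub_of_inv_eq_inv_add_inv_add_inv {n n₁ n₂ g : K}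
    (hn : 0 < n) (hn₁ : 0 < n₁) (h : n⁻¹ = g⁻¹ + n₁⁻¹ + n₂⁻¹) (hlt : n < n₁) (hg : 2 * n₂ ≤ g)
    (h₃ : 3 ≤ n₂) :
    n₂ + 1 ≤ 2 * n * n₁ / (n₁ - n) := by
  have hn₂ : 0 < n₂ := by linarith
  have key : (n₁ - n) / (n * n₁) ≤ 2 / (n₂ + 1) :=
    calc (n₁ - n) / (n * n₁) = g⁻¹ + n₂⁻¹ := by
          rw [← inv_sub_inv hn.ne' hn₁.ne']
          linarith
      _ ≤ (2 * n₂)⁻¹ + n₂⁻¹ := by gcongr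
      _ = 3 / (2 * n₂) := by field_simp; norm_num
      _ ≤ 2 / (n₂ + 1) := by
          rw [div_le_div_iff₀ (by positivity) (by positivity)]
          linarith
  rw [le_div_iff₀ (sub_pos.2 hlt)]
  rw [div_le_div_iff₀ (by positivity) (by positivity)] at key
  linarith

end Arithmetic

section Conjugacy

variable {G : Type*} [Group G]

theorem ncard_conjugatesOf_eq_index_centralizer (x : G) :
    (conjugatesOf x).ncard = (centralizer {x}).index :=
  calc (conjugatesOf x).ncard = (MulAction.stabilizer (ConjAct G) x).index := by
        rw [MulAction.index_stabilizer, ConjAct.orbit_eq_carrier_conjClasses]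
        rfl
    _ = (centralizer {x}).index := by
        rw [centralizer_eq_comap_stabilizer]
        exact (index_comap_of_surjective _ ConjAct.toConjAct.surjective).symm

theorem two_mul_card_centralizer_le_card [Finite G] {x : G} (hx : x ∉ center G) :
    2 * Nat.card (centralizer {x}) ≤ Nat.card G := by
  have hne : centralizer {x} ≠ ⊤ := by
    rwa [Ne, centralizer_eq_top_iff_subset, Set.singleton_subset_iff]
  rw [← (centralizer {x}).index_mul_card]
  exact Nat.mul_le_mul_right _ (one_lt_index_of_ne_top hne)

theorem disjoint_conjugatesOf_of_ne {x₁ x₂ : G} (hne : conjugatesOf x₁ ≠ conjugatesOf x₂) :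
    Disjoint (conjugatesOf x₁) (conjugatesOf x₂) :=
  Set.disjoint_left.2 fun _ h₁ h₂ =>
    hne ((h₁ : IsConj x₁ _).conjugatesOf_eq.trans (h₂ : IsConj x₂ _).conjugatesOf_eq.symm)

theorem one_notMem_conjugatesOf {x : G} (hx : x ∉ center G) : (1 : G) ∉ conjugatesOf x :=
  fun h => hx (isConj_one_left.1 h ▸ one_mem _)

variable {N : Subgroup G} {x₁ x₂ : G}

theorem coe_eq_insert_one_union_conjugatesOf [N.Normal] (hx₁ : x₁ ∈ N) (hx₂ : x₂ ∈ N)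
    (hcl : {C : Set G | ∃ x : G, x ∈ N ∧ x ∉ center G ∧ C = conjugatesOf x}
        = {conjugatesOf x₁, conjugatesOf x₂})
    (hZ : center G ⊓ N = ⊥) :
    (N : Set G) = insert 1 (conjugatesOf x₁ ∪ conjugatesOf x₂) := by
  refine Set.Subset.antisymm (fun y hy => ?_) ?_
  · by_cases hyc : y ∈ center G
    · left
      rw [← mem_bot, ← hZ]
      exact mem_inf.2 ⟨hyc, hy⟩
    · have hcy : conjugatesOf y ∈ ({conjugatesOf x₁, conjugatesOf x₂} : Set (Set G)) :=
        hcl ▸ ⟨y, hy, hyc, rfl⟩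
      rcases hcy with h | h
      · exact Or.inr (Or.inl (h ▸ mem_conjugatesOf_self))
      · exact Or.inr (Or.inr (h ▸ mem_conjugatesOf_self))
  · rintro y (rfl | h | h)
    · exact N.one_mem
    · exact Group.conjugates_subset_normal hx₁ h
    · exact Group.conjugates_subset_normal hx₂ h

theorem card_eq_one_add_index_centralizer_add_index_centralizer [Finite G] [N.Normal]
    (hx₁ : x₁ ∈ N) (hx₂ : x₂ ∈ N) (hz₁ : x₁ ∉ center G) (hz₂ : x₂ ∉ center G)
    (hne : conjugatesOf x₁ ≠ conjugatesOf x₂)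
    (hcl : {C : Set G | ∃ x : G, x ∈ N ∧ x ∉ center G ∧ C = conjugatesOf x}
        = {conjugatesOf x₁, conjugatesOf x₂})
    (hZ : center G ⊓ N = ⊥) :
    Nat.card N = 1 + (centralizer {x₁}).index + (centralizer {x₂}).index := by
  have h_one : (1 : G) ∉ conjugatesOf x₁ ∪ conjugatesOf x₂ := by
    rintro (h | h)
    exacts [one_notMem_conjugatesOf hz₁ h, one_notMem_conjugatesOf hz₂ h]
  rw [← SetLike.coe_sort_coe, Nat.card_coe_set_eq,
    coe_eq_insert_one_union_conjugatesOf hx₁ hx₂ hcl hZ, Set.ncard_insert_of_notMem h_one,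
    Set.ncard_union_eq (disjoint_conjugatesOf_of_ne hne),
    ncard_conjugatesOf_eq_index_centralizer, ncard_conjugatesOf_eq_index_centralizer]
  ring

theorem Subgroup.inv_card_eq_index_div_card {K : Type*} [Field K] [CharZero K] [Finite G]
    (H : Subgroup G) : (Nat.card H : K)⁻¹ = H.index / Nat.card G := by
  rw [← H.index_mul_card, Nat.cast_mul,
    div_mul_cancel_left₀ (by exact_mod_cast H.index_ne_zero_of_finite)]

theorem Subgroup.inv_index_eq_card_div_card {K : Type*} [Field K] [CharZero K] [Finite G]
    (H : Subgroup G) : (H.index : K)⁻¹ = Nat.card H / Nat.card G := by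
  rw [← H.card_mul_index, Nat.cast_mul, div_mul_cancel_left₀ (by exact_mod_cast Nat.card_pos.ne')]

theorem inv_index_eq_inv_card_add_inv_card_centralizer_add_inv_card_centralizer
    {K : Type*} [Field K] [CharZero K] [Finite G] [N.Normal]
    (hx₁ : x₁ ∈ N) (hx₂ : x₂ ∈ N) (hz₁ : x₁ ∉ center G) (hz₂ : x₂ ∉ center G)
    (hne : conjugatesOf x₁ ≠ conjugatesOf x₂)
    (hcl : {C : Set G | ∃ x : G, x ∈ N ∧ x ∉ center G ∧ C = conjugatesOf x}
        = {conjugatesOf x₁, conjugatesOf x₂})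
    (hZ : center G ⊓ N = ⊥) :
    (N.index : K)⁻¹ = (Nat.card G : K)⁻¹ + (Nat.card (centralizer {x₁}) : K)⁻¹
      + (Nat.card (centralizer {x₂}) : K)⁻¹ := by
  rw [N.inv_index_eq_card_div_card, inv_card_eq_index_div_card, inv_card_eq_index_div_card,
    card_eq_one_add_index_centralizer_add_index_centralizer hx₁ hx₂ hz₁ hz₂ hne hcl hZ]
  push_cast
  ring

end Conjugacy

theorem centralizer_bounds_second_two_noncentral_classes_coprime_general
    {G : Type*} [Group G] [Finite G] (N : Subgroup G) (hN : N.Normal)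
    (n : ℕ) (hidx : N.index = n)
    (x₁ x₂ : G) (hx₁ : x₁ ∈ N) (hx₂ : x₂ ∈ N)
    (hz₁ : x₁ ∉ Subgroup.center G) (hz₂ : x₂ ∉ Subgroup.center G)
    (hne : conjugatesOf x₁ ≠ conjugatesOf x₂)
    (hcl : {C : Set G | ∃ x : G, x ∈ N ∧ x ∉ Subgroup.center G ∧ C = conjugatesOf x}
        = {conjugatesOf x₁, conjugatesOf x₂})
    (hZ : Subgroup.center G ⊓ N = ⊥)
    (n₁ n₂ : ℕ) (hn₁ : n₁ = Nat.card (Subgroup.centralizer {x₁}))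
    (hn₂ : n₂ = Nat.card (Subgroup.centralizer {x₂})) (hlt : n₁ < n₂) :
    ⌊(n * n₁ : ℚ) / ((n₁ : ℚ) - n)⌋ + 1 ≤ (n₂ : ℤ) ∧
      (n₂ : ℤ) ≤ ⌊(2 * n * n₁ : ℚ) / ((n₁ : ℚ) - n)⌋ - 1 := by
  subst hidx hn₁ hn₂
  have := hN
  have h := inv_index_eq_inv_card_add_inv_card_centralizer_add_inv_card_centralizer (K := ℚ)
    hx₁ hx₂ hz₁ hz₂ hne hcl hZ
  have hn : 0 < N.index := Nat.pos_of_ne_zero N.index_ne_zero_of_finite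
  obtain ⟨hn_lt, hlower⟩ := lt_and_mul_div_sub_lt_of_inv_eq_inv_add_inv_add_inv
    (by exact_mod_cast hn) (by exact_mod_cast Nat.card_pos) (by exact_mod_cast Nat.card_pos)
    (by exact_mod_cast Nat.card_pos) h
  have hn_lt_nat : N.index < Nat.card (centralizer {x₁}) := by exact_mod_cast hn_lt
  have hupper := add_one_le_two_mul_mul_div_sub_of_inv_eq_inv_add_inv_add_inv
    (by exact_mod_cast hn) (by exact_mod_cast Nat.card_pos) h hn_lt
    (by exact_mod_cast two_mul_card_centralizer_le_card hz₂) (by norm_cast; omega)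
  constructor
  · rw [Int.add_one_le_iff, Int.floor_lt]
    exact_mod_cast hlower
  · rw [Int.le_sub_one_iff, Int.lt_iff_add_one_le, Int.le_floor]
    exact_mod_cast hupper

/-- **Theorem 3.2.2(ii).** Suppose `N ⊴ G` with `|G:N| = n` contains exactly
two non-central `G`-conjugacy classes `x₁^G`, `x₂^G` of coprime sizes, and `Z(G) ∩ N = 1`.
With `n₁ = |C_G(x₁)|`, `n₂ = |C_G(x₂)|` and `n₁ < n₂`, we have
`⌊n·n₁/(n₁ - n)⌋ + 1 ≤ n₂ ≤ ⌊2n·n₁/(n₁ - n)⌋ - 1`. -/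
theorem centralizer_bounds_second_two_noncentral_classes_coprime
    {G : Type*} [Group G] [Finite G] (N : Subgroup G) (hN : N.Normal)
    (n : ℕ) (hidx : N.index = n)
    (x₁ x₂ : G) (hx₁ : x₁ ∈ N) (hx₂ : x₂ ∈ N)
    (hz₁ : x₁ ∉ Subgroup.center G) (hz₂ : x₂ ∉ Subgroup.center G)
    (hne : conjugatesOf x₁ ≠ conjugatesOf x₂)
    (hcl : {C : Set G | ∃ x : G, x ∈ N ∧ x ∉ Subgroup.center G ∧ C = conjugatesOf x}
        = {conjugatesOf x₁, conjugatesOf x₂})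
    (hcop : Nat.Coprime (conjugatesOf x₁).ncard (conjugatesOf x₂).ncard)
    (hZ : Subgroup.center G ⊓ N = ⊥)
    (n₁ n₂ : ℕ) (hn₁ : n₁ = Nat.card (Subgroup.centralizer {x₁}))
    (hn₂ : n₂ = Nat.card (Subgroup.centralizer {x₂})) (hlt : n₁ < n₂) :
    ⌊(n * n₁ : ℚ) / ((n₁ : ℚ) - n)⌋ + 1 ≤ (n₂ : ℤ) ∧
      (n₂ : ℤ) ≤ ⌊(2 * n * n₁ : ℚ) / ((n₁ : ℚ) - n)⌋ - 1 :=
  centralizer_bounds_second_two_noncentral_classes_coprime_general N hN n hidx x₁ x₂ hx₁ hx₂ hz₁ hz₂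
    hne hcl hZ n₁ n₂ hn₁ hn₂ hlt
end

section
/- Let γ : ℕ → ℕ be defined by γ(1) = 1 and γ(k) = k·γ(k−1)² for k ≥ 2. If G is a finite solvable group with kpp(G) = k, then |G| ≤ γ(k). -/
/-!
Induct on `|G|`. A nontrivial finite solvable group has a nontrivial abelian normal subgroup `N`
of prime exponent (the `p`-torsion of an abelian minimal normal subgroup). Every element of `N`
has prime-power order, and since `N` centralizes each of its elements, each `G`-class inside `N`
has at most `|G : N|` elements; so if `s ≥ 2` prime-power classes of `G` lie in `N`, then
`|N| ≤ s · |G/N|`. Conversely, every prime-power element of `G/N` is the image of a prime-power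
element of `G` (its `p`-part), so the nontrivial prime-power classes of `G/N` are images of
prime-power classes of `G` outside `N`, and `kpp(G/N) ≤ k - s + 1 ≤ k - 1`. By induction
`|G| = |G/N| · |N| ≤ k · |G/N|² ≤ k · γ(k-1)² = γ(k)`.
-/

open Subgroup

section Gamma

variable {γ : ℕ → ℕ}

theorem gamma_pos (hγ1 : 0 < γ 1) (hγ : ∀ k : ℕ, 2 ≤ k → γ k = k * γ (k - 1) ^ 2) {k : ℕ}
    (hk : 1 ≤ k) : 0 < γ k := by
  induction k, hk using Nat.le_induction with
  | base => exact hγ1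
  | succ k _ ih =>
    rw [hγ (k + 1) (by omega), Nat.add_sub_cancel]
    positivity

theorem gamma_monotoneOn (hγ1 : 0 < γ 1) (hγ : ∀ k : ℕ, 2 ≤ k → γ k = k * γ (k - 1) ^ 2) :
    MonotoneOn γ (Set.Ici 1) := by
  refine monotoneOn_nat_Ici_of_le_succ fun k hk => ?_
  have hpos : 0 < γ k := gamma_pos hγ1 hγ hk
  rw [hγ (k + 1) (by omega), Nat.add_sub_cancel]
  nlinarith

end Gamma

/-- Unlike `IsPrimePow`, the exponent may be `0`, so that `1` has prime-power order. -/
def HasPrimePowOrder {M : Type*} [Monoid M] (x : M) : Prop :=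
  ∃ p m : ℕ, p.Prime ∧ orderOf x = p ^ m

theorem HasPrimePowOrder.of_orderOf_dvd {M : Type*} [Monoid M] {x : M} {p m : ℕ} (hp : p.Prime)
    (h : orderOf x ∣ p ^ m) : HasPrimePowOrder x := by
  obtain ⟨i, -, hi⟩ := (Nat.dvd_prime_pow hp).1 h
  exact ⟨p, i, hp, hi⟩

theorem exists_hasPrimePowOrder_map_eq {G M : Type*} [Group G] [Finite G] [Monoid M] (f : G →* M)
    {x : G} (hx : HasPrimePowOrder (f x)) : ∃ y, HasPrimePowOrder y ∧ f y = f x := by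
  obtain ⟨q, m, hq, hm⟩ := hx
  -- `y` is the `q`-part `(x ^ r) ^ s` of `x`: `r` is the `q'`-part of `orderOf x`, and `s`
  -- inverts `r` modulo the `q`-power `orderOf (f x)`.
  set r := ordCompl[q] (orderOf x)
  have hr : r.Coprime (orderOf (f x)) :=
    hm ▸ Nat.Coprime.pow_right m
      (hq.coprime_iff_not_dvd.2 (Nat.not_dvd_ordCompl hq (orderOf_pos x).ne')).symm
  obtain ⟨s, hs⟩ := exists_pow_eq_self_of_coprime hr
  refine ⟨(x ^ r) ^ s, .of_orderOf_dvd (m := (orderOf x).factorization q) hq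
    (orderOf_dvd_of_pow_eq_one ?_), by simp [hs]⟩
  rw [← pow_mul, ← pow_mul, mul_left_comm, mul_comm r, Nat.ordProj_mul_ordCompl_eq_self,
    pow_mul', pow_orderOf_eq_one, one_pow]

section Group

variable {G : Type*} [Group G]

theorem MonoidHom.image_conjugatesOf {H : Type*} [Group H] {f : G →* H}
    (hf : Function.Surjective f) (x : G) : f '' conjugatesOf x = conjugatesOf (f x) := by
  ext y
  refine ⟨?_, fun hy => ?_⟩
  · rintro ⟨z, hz, rfl⟩
    exact f.map_isConj hz
  · obtain ⟨c, rfl⟩ := isConj_iff.1 hy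
    obtain ⟨g, rfl⟩ := hf c
    exact ⟨g * x * g⁻¹, isConj_iff.2 ⟨g, rfl⟩, by simp⟩

theorem Subgroup.conjugatesOf_subset {N : Subgroup G} [hN : N.Normal] {x : G} (hx : x ∈ N) :
    conjugatesOf x ⊆ N := by
  rintro y hy
  obtain ⟨c, rfl⟩ := isConj_iff.1 hy
  exact hN.conj_mem x hx c

theorem ncard_conjugatesOf_le_index {N : Subgroup G} [N.FiniteIndex] {x : G}
    (hN : N ≤ centralizer {x}) : (conjugatesOf x).ncard ≤ N.index := by
  have hconst (a b : G) (hab : QuotientGroup.leftRel N a b) : a * x * a⁻¹ = b * x * b⁻¹ := by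
    have hc : a⁻¹ * b * x = x * (a⁻¹ * b) :=
      (mem_centralizer_iff.1 (hN (QuotientGroup.leftRel_apply.1 hab)) x rfl).symm
    calc a * x * a⁻¹ = a * (a⁻¹ * b * x * (a⁻¹ * b)⁻¹) * a⁻¹ := by rw [hc]; group
      _ = b * x * b⁻¹ := by group
  have hrange : conjugatesOf x =
      Set.range (Quotient.lift (fun g => g * x * g⁻¹) hconst : G ⧸ N → G) := by
    ext y
    refine ⟨fun hy => ?_, ?_⟩
    · obtain ⟨g, rfl⟩ := isConj_iff.1 hy
      exact ⟨QuotientGroup.mk g, rfl⟩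
    · rintro ⟨q, rfl⟩
      induction q using QuotientGroup.induction_on with
      | H g => exact isConj_iff.2 ⟨g, rfl⟩
  rw [hrange, ← Nat.card_coe_set_eq]
  exact Finite.card_range_le (α := G ⧸ N) _

theorem card_le_ncard_mul_index_of_le_centralizer [Finite G] {N : Subgroup G}
    (hN : N ≤ centralizer N) {S : Set (Set G)} (hcover : (N : Set G) ⊆ ⋃₀ S)
    (hS : ∀ C ∈ S, ∃ x ∈ N, C = conjugatesOf x) : Nat.card N ≤ S.ncard * N.index := by
  have hSfin : S.Finite := Set.toFinite S
  have hclass : ∀ C ∈ hSfin.toFinset, C.ncard ≤ N.index := by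
    intro C hC
    obtain ⟨x, hx, rfl⟩ := hS C (hSfin.mem_toFinset.1 hC)
    exact ncard_conjugatesOf_le_index (hN.trans (centralizer_le (Set.singleton_subset_iff.2 hx)))
  calc Nat.card N = (N : Set G).ncard := Nat.card_coe_set_eq _
    _ ≤ (⋃ C ∈ hSfin.toFinset, C).ncard := by
      refine Set.ncard_le_ncard ?_
      simpa [Set.sUnion_eq_biUnion] using hcover
    _ ≤ ∑ C ∈ hSfin.toFinset, C.ncard := hSfin.toFinset.set_ncard_biUnion_le id
    _ ≤ S.ncard * N.index := by
      rw [Set.ncard_eq_toFinset_card S hSfin, ← smul_eq_mul]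
      exact Finset.sum_le_card_nsmul _ _ _ hclass

theorem exists_normal_ne_bot_le_centralizer [Finite G] [Group.IsSolvable G] [Nontrivial G] :
    ∃ N : Subgroup G, N.Normal ∧ N ≠ ⊥ ∧ N ≤ centralizer N := by
  obtain ⟨N, ⟨hNn, hN⟩, hmin⟩ := (Set.toFinite {N : Subgroup G | N.Normal ∧ N ≠ ⊥}).exists_minimal
    ⟨⊤, inferInstance, top_ne_bot⟩
  refine ⟨N, hNn, hN, commutator_eq_bot_iff_le_centralizer.1 ?_⟩
  by_contra hc
  have hlt := Group.IsSolvable.commutator_lt_of_ne_bot hN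
  exact hlt.not_ge (hmin ⟨commutator_normal N N, hc⟩ hlt.le)

theorem exists_normal_ne_bot_pow_prime_eq_one [Finite G] {N : Subgroup G} [hNn : N.Normal]
    (hN : N ≠ ⊥) (hNc : N ≤ centralizer N) :
    ∃ T ≤ N, T.Normal ∧ T ≠ ⊥ ∧ ∃ p : ℕ, p.Prime ∧ ∀ x ∈ T, x ^ p = 1 := by
  obtain ⟨x, hxN, hx1⟩ := N.bot_or_exists_ne_one.resolve_left hN
  obtain ⟨p, hp, hpx⟩ := Nat.exists_prime_and_dvd (orderOf_eq_one_iff.not.2 hx1)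
  have hcomm {a b : G} (ha : a ∈ N) (hb : b ∈ N) : Commute a b :=
    mem_centralizer_iff.1 (hNc hb) a ha
  let T : Subgroup G :=
    { carrier := {g | g ∈ N ∧ g ^ p = 1}
      one_mem' := ⟨N.one_mem, one_pow p⟩
      mul_mem' := fun ha hb =>
        ⟨N.mul_mem ha.1 hb.1, by rw [(hcomm ha.1 hb.1).mul_pow, ha.2, hb.2, one_mul]⟩
      inv_mem' := fun ha => ⟨N.inv_mem ha.1, by rw [inv_pow, ha.2, inv_one]⟩ }
  have hT : T.Normal :=
    ⟨fun g hg h => ⟨hNn.conj_mem g hg.1 h, by rw [conj_pow, hg.2, mul_one, mul_inv_cancel]⟩⟩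
  obtain ⟨y, hyN, hy⟩ : ∃ y ∈ N, orderOf y = p :=
    ⟨_, N.pow_mem hxN _, orderOf_pow_orderOf_div (orderOf_pos x).ne' hpx⟩
  have hyT : y ∈ T := ⟨hyN, hy ▸ pow_orderOf_eq_one y⟩
  refine ⟨T, fun g hg => hg.1, hT, fun hbot => ?_, p, hp, fun g hg => hg.2⟩
  rw [hbot, mem_bot] at hyT
  exact hp.one_lt.ne' (by rw [← hy, hyT, orderOf_one])

theorem exists_normal_ne_bot_le_centralizer_hasPrimePowOrder [Finite G] [Group.IsSolvable G]
    [Nontrivial G] :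
    ∃ N : Subgroup G, N.Normal ∧ N ≠ ⊥ ∧ N ≤ centralizer N ∧ ∀ x ∈ N, HasPrimePowOrder x := by
  obtain ⟨A, hAn, hA, hAc⟩ := exists_normal_ne_bot_le_centralizer (G := G)
  obtain ⟨N, hNA, hNn, hN, p, hp, hNp⟩ := exists_normal_ne_bot_pow_prime_eq_one hA hAc
  refine ⟨N, hNn, hN, hNA.trans (hAc.trans (centralizer_le hNA)), fun x hx => ?_⟩
  exact .of_orderOf_dvd (m := 1) hp (by simpa using orderOf_dvd_of_pow_eq_one (hNp x hx))

variable (G) in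
def primePowConjClasses : Set (Set G) :=
  {C | ∃ x : G, HasPrimePowOrder x ∧ C = conjugatesOf x}

theorem conjugatesOf_one_mem_primePowConjClasses : conjugatesOf (1 : G) ∈ primePowConjClasses G :=
  ⟨1, ⟨2, 0, Nat.prime_two, by simp⟩, rfl⟩

theorem ncard_primePowConjClasses_pos [Finite G] : 0 < (primePowConjClasses G).ncard :=
  (Set.ncard_pos (Set.toFinite _)).2 ⟨_, conjugatesOf_one_mem_primePowConjClasses⟩

theorem ncard_primePowConjClasses_quotient_add_le [Finite G] (N : Subgroup G) [N.Normal] :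
    (primePowConjClasses (G ⧸ N)).ncard + {C ∈ primePowConjClasses G | C ⊆ N}.ncard ≤
      (primePowConjClasses G).ncard + 1 := by
  set S := {C ∈ primePowConjClasses G | C ⊆ N}
  have hsub : primePowConjClasses (G ⧸ N) ⊆
      Set.image (QuotientGroup.mk' N) '' (primePowConjClasses G \ S) ∪ {conjugatesOf 1} := by
    rintro _ ⟨x', hx', rfl⟩
    obtain ⟨x, rfl⟩ := QuotientGroup.mk'_surjective N x'
    obtain ⟨y, hy, hyx⟩ := exists_hasPrimePowOrder_map_eq (QuotientGroup.mk' N) hx'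
    rw [← hyx]
    by_cases hyN : conjugatesOf y ⊆ N
    · right
      rw [QuotientGroup.mk'_apply, (QuotientGroup.eq_one_iff y).2 (hyN mem_conjugatesOf_self)]
      exact Set.mem_singleton _
    · left
      exact ⟨conjugatesOf y, ⟨⟨y, hy, rfl⟩, fun h => hyN h.2⟩,
        MonoidHom.image_conjugatesOf (QuotientGroup.mk'_surjective N) y⟩
  calc (primePowConjClasses (G ⧸ N)).ncard + S.ncard
      ≤ (primePowConjClasses G \ S).ncard + 1 + S.ncard := by
        gcongr
        refine (Set.ncard_le_ncard hsub).trans ((Set.ncard_union_le _ _).trans ?_)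
        rw [Set.ncard_singleton]
        gcongr
        exact Set.ncard_image_le
    _ = (primePowConjClasses G).ncard + 1 := by
        rw [add_right_comm, Set.ncard_sdiff_add_ncard_of_subset fun C hC => hC.1]

theorem one_lt_ncard_primePowConjClasses_subset [Finite G] {N : Subgroup G} [N.Normal]
    (hN : N ≠ ⊥) (hpp : ∀ x ∈ N, HasPrimePowOrder x) :
    1 < {C ∈ primePowConjClasses G | C ⊆ N}.ncard := by
  obtain ⟨x, hxN, hx1⟩ := N.bot_or_exists_ne_one.resolve_left hN
  refine (Set.one_lt_ncard (Set.toFinite _)).2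
    ⟨conjugatesOf x, ⟨⟨x, hpp x hxN, rfl⟩, conjugatesOf_subset hxN⟩, conjugatesOf 1,
      ⟨conjugatesOf_one_mem_primePowConjClasses, conjugatesOf_subset N.one_mem⟩, fun h => hx1 ?_⟩
  exact isConj_one_right.1 (isConj_iff_conjugatesOf_eq.2 h.symm)

theorem card_le_ncard_primePowConjClasses_subset_mul_index [Finite G] {N : Subgroup G}
    [N.Normal] (hNc : N ≤ centralizer N) (hpp : ∀ x ∈ N, HasPrimePowOrder x) :
    Nat.card N ≤ {C ∈ primePowConjClasses G | C ⊆ N}.ncard * N.index := by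
  refine card_le_ncard_mul_index_of_le_centralizer hNc (fun x hx => ?_) ?_
  · exact ⟨conjugatesOf x, ⟨⟨x, hpp x hx, rfl⟩, conjugatesOf_subset hx⟩, mem_conjugatesOf_self⟩
  · rintro C ⟨⟨x, -, rfl⟩, hC⟩
    exact ⟨x, hC mem_conjugatesOf_self, rfl⟩

end Group

theorem card_le_gamma_ncard_primePowConjClasses {γ : ℕ → ℕ} (hγ1 : 0 < γ 1)
    (hγ : ∀ k : ℕ, 2 ≤ k → γ k = k * γ (k - 1) ^ 2) (G : Type*) [Group G] [Finite G]
    [Group.IsSolvable G] : Nat.card G ≤ γ (primePowConjClasses G).ncard := by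
  induction hn : Nat.card G using Nat.strong_induction_on generalizing G with
  | _ n ih =>
  subst hn
  rcases subsingleton_or_nontrivial G with hG | hG
  · rw [Nat.card_of_subsingleton (1 : G)]
    exact gamma_pos hγ1 hγ ncard_primePowConjClasses_pos
  obtain ⟨N, hNn, hN, hNc, hpp⟩ := exists_normal_ne_bot_le_centralizer_hasPrimePowOrder (G := G)
  set k := (primePowConjClasses G).ncard
  set j := (primePowConjClasses (G ⧸ N)).ncard
  set s := {C ∈ primePowConjClasses G | C ⊆ N}.ncard
  have hcard : Nat.card G = Nat.card (G ⧸ N) * Nat.card N :=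
    N.card_eq_card_quotient_mul_card_subgroup
  have hNs : Nat.card N ≤ s * Nat.card (G ⧸ N) :=
    card_le_ncard_primePowConjClasses_subset_mul_index hNc hpp
  have hjs : j + s ≤ k + 1 := ncard_primePowConjClasses_quotient_add_le N
  have hs : 1 < s := one_lt_ncard_primePowConjClasses_subset hN hpp
  have hj : 0 < j := ncard_primePowConjClasses_pos
  have hQG : Nat.card (G ⧸ N) < Nat.card G := by
    rw [hcard]
    exact lt_mul_of_one_lt_right Nat.card_pos
      (Finite.one_lt_card_iff_nontrivial.2 ((nontrivial_iff_ne_bot N).2 hN))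
  have hQ : Nat.card (G ⧸ N) ≤ γ (k - 1) :=
    (ih _ hQG (G ⧸ N) rfl).trans
      (gamma_monotoneOn hγ1 hγ (Set.mem_Ici.2 hj) (Set.mem_Ici.2 (by omega)) (by omega))
  calc Nat.card G ≤ Nat.card (G ⧸ N) * (s * Nat.card (G ⧸ N)) :=
        hcard ▸ Nat.mul_le_mul_left _ hNs
    _ ≤ γ (k - 1) * (k * γ (k - 1)) := by gcongr; omega
    _ = γ k := by rw [hγ k (by omega)]; ring

/-- **Theorem 4.8, recursive bound.** Let `γ : ℕ → ℕ` satisfy `γ(1) = 1`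
and `γ(k) = k·γ(k-1)²` for `k ≥ 2`. If `G` is a finite solvable group with `kpp(G) = k`
conjugacy classes of prime-power order elements, then `|G| ≤ γ(k)`. -/
theorem card_solvable_le_gamma_of_primePow_classes
    (γ : ℕ → ℕ) (hγ1 : γ 1 = 1) (hγ : ∀ k : ℕ, 2 ≤ k → γ k = k * γ (k - 1) ^ 2)
    {G : Type*} [Group G] [Finite G] (hsolv : IsSolvable G) (k : ℕ)
    (hk : {C : Set G | ∃ x : G, (∃ p m : ℕ, p.Prime ∧ orderOf x = p ^ m) ∧
        C = conjugatesOf x}.ncard = k) :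
    Nat.card G ≤ γ k := by
  have : Group.IsSolvable G := hsolv
  exact hk ▸ card_le_gamma_ncard_primePowConjClasses (by rw [hγ1]; exact Nat.one_pos) hγ G
end

section
/- Let G be a finite group with exactly s non-central conjugacy classes, where s ≥ 1. Then |G| < (s+1) · ∏_{i=0}^{s-1} (s+1-i)^(2^(s-1-i)). -/
/-!
Landau's argument. Dividing the class equation by `|G|` writes `1` as a sum of `s + 1` unit
fractions: `1 / |G : Z(G)|` plus `1 / |C_G(x)|` for a representative `x` of each non-central
class. If `k + 1` unit fractions `1 / y` add up to `p / q` with `p ≥ 1`, the smallest `y` is at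
most `(k + 2) q`, and the remaining ones add up to a fraction with denominator `q y`; by
induction every `y` is at most `q ^ 2 ^ k * ∏ i < k, (i + 2) ^ 2 ^ i`. Since
`|Z(G)| < |C_G(x)|` for non-central `x`, `|G| = |Z(G)| |G : Z(G)|` is less than the product of
the smallest term, which is at most `s + 1`, with one of the other terms.
-/

open Finset Subgroup ConjClasses

def landauBound (k q : ℕ) : ℕ := q ^ 2 ^ k * ∏ i ∈ range k, (i + 2) ^ 2 ^ i

theorem landauBound_succ (k q : ℕ) : landauBound (k + 1) q = landauBound k ((k + 2) * q ^ 2) := by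
  simp only [landauBound, prod_range_succ, mul_pow, ← pow_mul, pow_succ]
  ring

theorem landauBound_mono (k : ℕ) : Monotone (landauBound k) := fun _ _ h =>
  Nat.mul_le_mul_right _ (Nat.pow_le_pow_left h _)

theorem le_landauBound (k q : ℕ) : q ≤ landauBound k q :=
  calc q ≤ q ^ 2 ^ k := Nat.le_self_pow (by positivity) q
    _ ≤ landauBound k q := Nat.le_mul_of_pos_right _ (prod_pos fun i _ => by positivity)

theorem landauBound_one (k : ℕ) :
    landauBound k 1 = ∏ i ∈ range k, (k + 1 - i) ^ 2 ^ (k - 1 - i) := by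
  rw [landauBound, one_pow, one_mul, ← prod_range_reflect]
  refine prod_congr rfl fun i hi => ?_
  rw [show k - 1 - i + 2 = k + 1 - i by have := mem_range.mp hi; omega]

def recipSum (M : Multiset ℕ) : ℚ := (M.map fun y : ℕ => (y : ℚ)⁻¹).sum

@[simp]
theorem recipSum_cons (a : ℕ) (M : Multiset ℕ) :
    recipSum (a ::ₘ M) = (a : ℚ)⁻¹ + recipSum M := by
  simp [recipSum]

@[simp]
theorem recipSum_singleton (a : ℕ) : recipSum {a} = (a : ℚ)⁻¹ := by
  simp [recipSum]

theorem recipSum_pos {M : Multiset ℕ} (hM : M ≠ 0) (hpos : ∀ y ∈ M, 0 < y) :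
    0 < recipSum M := by
  obtain ⟨y, hy⟩ := Multiset.exists_mem_of_ne_zero hM
  obtain ⟨M', rfl⟩ := Multiset.exists_cons_of_mem hy
  rw [recipSum_cons]
  have : 0 ≤ recipSum M' := Multiset.sum_nonneg fun x hx => by
    obtain ⟨z, -, rfl⟩ := Multiset.mem_map.mp hx; positivity
  have : (0 : ℚ) < (y : ℚ)⁻¹ := by have := hpos y hy; positivity
  linarith

theorem exists_mem_mul_recipSum_le_card {M : Multiset ℕ} (hM : M ≠ 0) :
    ∃ y ∈ M, y * recipSum M ≤ Multiset.card M := by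
  obtain ⟨y, hyM, hmin⟩ := M.exists_min_image id hM
  refine ⟨y, hyM, ?_⟩
  calc y * recipSum M = (M.map fun z : ℕ => (y : ℚ) / z).sum := by
        simp only [recipSum, ← Multiset.sum_map_mul_left, div_eq_mul_inv]
    _ ≤ Multiset.card (M.map fun z : ℕ => (y : ℚ) / z) • (1 : ℚ) :=
        Multiset.sum_le_card_nsmul _ _ fun x hx => by
          obtain ⟨z, hz, rfl⟩ := Multiset.mem_map.mp hx
          exact div_le_one_of_le₀ (by exact_mod_cast hmin z hz) (Nat.cast_nonneg z)
    _ = Multiset.card M := by simp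

theorem exists_nat_mul_recipSum_of_cons {y q p : ℕ} {M : Multiset ℕ} (hy : 0 < y) (hq : 0 < q)
    (hM : 0 < recipSum M) (hsum : q * recipSum (y ::ₘ M) = p) :
    ∃ p' : ℕ, 0 < p' ∧ ((q * y : ℕ) : ℚ) * recipSum M = p' := by
  have hrest : ((q * y : ℕ) : ℚ) * recipSum M = y * p - q := by
    have : (y : ℚ) ≠ 0 := by exact_mod_cast hy.ne'
    rw [← hsum, recipSum_cons]
    push_cast
    field_simp
    ring
  have hlt : q < y * p := by
    have : (0 : ℚ) < ((q * y : ℕ) : ℚ) * recipSum M :=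
      mul_pos (by exact_mod_cast Nat.mul_pos hq hy) hM
    have : (q : ℚ) < y * p := by linarith
    exact_mod_cast this
  exact ⟨y * p - q, by omega, by rw [hrest]; push_cast [Nat.cast_sub hlt.le]; ring⟩

theorem le_landauBound_of_mul_recipSum_eq (k : ℕ) {M : Multiset ℕ} {q p : ℕ}
    (hcard : Multiset.card M = k + 1) (hpos : ∀ y ∈ M, 0 < y) (hp : 0 < p)
    (hsum : q * recipSum M = p) : ∀ y ∈ M, y ≤ landauBound k q := by
  induction k generalizing M q p with
  | zero =>
    obtain ⟨a, rfl⟩ := Multiset.card_eq_one.mp hcard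
    have ha : (a : ℚ) ≠ 0 := by exact_mod_cast (hpos a (Multiset.mem_singleton_self a)).ne'
    have hq : q = p * a := by
      rw [recipSum_singleton, ← div_eq_mul_inv, div_eq_iff ha] at hsum
      exact_mod_cast hsum
    intro y hy
    rw [Multiset.mem_singleton.mp hy, landauBound, pow_zero, pow_one, prod_range_zero, mul_one, hq]
    exact Nat.le_mul_of_pos_left a hp
  | succ k ih =>
    obtain ⟨y₀, hy₀M, hy₀⟩ :=
      exists_mem_mul_recipSum_le_card (M := M) (by rintro rfl; simp at hcard)
    obtain ⟨M', rfl⟩ := Multiset.exists_cons_of_mem hy₀M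
    have hy₀pos : 0 < y₀ := hpos y₀ (Multiset.mem_cons_self _ _)
    have hposM' : ∀ y ∈ M', 0 < y := fun y hy => hpos y (Multiset.mem_cons_of_mem hy)
    have hM'card : Multiset.card M' = k + 1 := by simpa using hcard
    have hq : 0 < q := Nat.pos_of_ne_zero fun h => by
      rw [h, Nat.cast_zero, zero_mul, eq_comm, Nat.cast_eq_zero] at hsum
      omega
    -- the multiplier `p ≥ 1` turns `y₀ * (p / q) ≤ k + 2` into `y₀ ≤ (k + 2) * q`
    have hy₀q : y₀ ≤ (k + 2) * q := by
      have : (y₀ : ℚ) * p ≤ (k + 2) * q := by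
        rw [← hsum, hcard] at *
        push_cast at hy₀
        nlinarith
      have : y₀ * p ≤ (k + 2) * q := by exact_mod_cast this
      nlinarith
    obtain ⟨p', hp', hsum'⟩ := exists_nat_mul_recipSum_of_cons hy₀pos hq
      (recipSum_pos (by rintro rfl; simp at hM'card) hposM') hsum
    have hbound : landauBound k (q * y₀) ≤ landauBound (k + 1) q := by
      rw [landauBound_succ]
      exact landauBound_mono k (by nlinarith)
    intro y hy
    rcases Multiset.mem_cons.mp hy with rfl | hy
    · exact (Nat.le_mul_of_pos_left y hq).trans ((le_landauBound k _).trans hbound)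
    · exact (ih hM'card hposM' hp' hsum' y hy).trans hbound

section ClassEquation

variable {G : Type*} [Group G]

theorem ConjClasses.mk_mem_noncenter_iff {x : G} :
    ConjClasses.mk x ∈ noncenter G ↔ x ∉ center G := by
  refine ⟨fun hx hc => (mk_bijOn G).mapsTo hc hx, fun hx => ?_⟩
  by_contra hc
  obtain ⟨z, hz, hzx⟩ := (mk_bijOn G).surjOn hc
  rw [(mk_eq_mk_iff_isConj.mp hzx).eq_of_left_mem_center hz] at hz
  exact hx hz

theorem ConjClasses.carrier_injective :
    Function.Injective (ConjClasses.carrier (α := G)) := by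
  intro c d h
  obtain ⟨x, rfl⟩ := mk_surjective c
  exact mem_carrier_iff_mk_eq.mp (h ▸ mem_carrier_mk)

theorem ncard_setOf_conjugatesOf_notMem_center :
    {C : Set G | ∃ x : G, x ∉ center G ∧ C = conjugatesOf x}.ncard = (noncenter G).ncard := by
  have : {C : Set G | ∃ x : G, x ∉ center G ∧ C = conjugatesOf x} =
      carrier '' noncenter G := by
    ext C
    constructor
    · rintro ⟨x, hx, rfl⟩
      exact ⟨ConjClasses.mk x, mk_mem_noncenter_iff.mpr hx, rfl⟩
    · rintro ⟨c, hc, rfl⟩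
      obtain ⟨x, rfl⟩ := mk_surjective c
      exact ⟨x, mk_mem_noncenter_iff.mp hc, rfl⟩
  rw [this, Set.ncard_image_of_injective _ carrier_injective]

theorem ConjClasses.card_carrier_mk_mul_card_centralizer (x : G) :
    Nat.card (ConjClasses.mk x).carrier * Nat.card (centralizer {x}) = Nat.card G := by
  rw [nat_card_centralizer_nat_card_stabilizer, ← ConjAct.orbit_eq_carrier_conjClasses,
    Nat.card_coe_set_eq, ← MulAction.index_stabilizer, mul_comm, card_mul_index]
  exact Nat.card_congr ConjAct.ofConjAct.toEquiv

theorem ConjClasses.mk_out (c : ConjClasses G) : ConjClasses.mk (Quotient.out c) = c :=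
  Quotient.out_eq c

noncomputable def ConjClasses.centralizerCard (c : ConjClasses G) : ℕ :=
  Nat.card (centralizer {Quotient.out c})

theorem ConjClasses.card_carrier_mul_centralizerCard (c : ConjClasses G) :
    Nat.card c.carrier * c.centralizerCard = Nat.card G := by
  rw [centralizerCard, ← card_carrier_mk_mul_card_centralizer (Quotient.out c), mk_out]

variable [Finite G]

theorem Subgroup.card_center_lt_card_centralizer {x : G} (hx : x ∉ center G) :
    Nat.card (center G) < Nat.card (centralizer {x}) :=
  Set.Finite.card_lt_card (Set.toFinite _) <| LE.le.ssubset_of_not_superset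
    (center_le_centralizer _) fun h => hx (h (mem_centralizer_singleton_iff.mpr rfl))

theorem ConjClasses.card_center_lt_centralizerCard {c : ConjClasses G} (hc : c ∈ noncenter G) :
    Nat.card (center G) < c.centralizerCard := by
  rw [← mk_out c] at hc
  exact card_center_lt_card_centralizer (mk_mem_noncenter_iff.mp hc)

variable (G) in
/-- The central classes are lumped together: they contribute `|Z(G)| / |G| = 1 / |G : Z(G)|`. -/
noncomputable def centralizerOrders : Multiset ℕ :=
  (center G).index ::ₘ (noncenter G).toFinite.toFinset.val.map centralizerCard

theorem card_centralizerOrders :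
    Multiset.card (centralizerOrders G) = (noncenter G).ncard + 1 := by
  rw [centralizerOrders, Multiset.card_cons, Multiset.card_map,
    Set.ncard_eq_toFinset_card _ (noncenter G).toFinite]
  rfl

theorem pos_of_mem_centralizerOrders {y : ℕ} (hy : y ∈ centralizerOrders G) : 0 < y := by
  rcases Multiset.mem_cons.mp hy with rfl | hy
  · exact Nat.pos_of_ne_zero index_ne_zero_of_finite
  · obtain ⟨c, -, rfl⟩ := Multiset.mem_map.mp hy
    exact Nat.card_pos

theorem recipSum_centralizerOrders : recipSum (centralizerOrders G) = 1 := by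
  have hG : (Nat.card G : ℚ) ≠ 0 := by exact_mod_cast Nat.card_pos.ne'
  have hclass := Group.nat_card_center_add_sum_card_noncenter_eq_card G
  rw [← (noncenter G).toFinite.coe_toFinset, finsum_mem_coe_finset] at hclass
  rw [← mul_right_inj' hG, mul_one, centralizerOrders, recipSum_cons, recipSum, Multiset.map_map,
    Function.comp_def, Finset.sum_map_val, mul_add, Finset.mul_sum]
  have hcancel {a b : ℕ} (hab : a * b = Nat.card G) :
      (Nat.card G : ℚ) * (b : ℚ)⁻¹ = a := by
    have hb : (b : ℚ) ≠ 0 :=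
      Nat.cast_ne_zero.mpr (right_ne_zero_of_mul (hab ▸ Nat.card_pos.ne'))
    rw [← hab, Nat.cast_mul, mul_inv_cancel_right₀ hb]
  rw [hcancel (card_mul_index _),
    Finset.sum_congr rfl fun c _ => hcancel (card_carrier_mul_centralizerCard c)]
  exact_mod_cast hclass

theorem exists_card_lt_mul_of_mem_centralizerOrders (hG : (noncenter G).Nonempty) {y : ℕ}
    (hy : y ∈ centralizerOrders G) : ∃ y' ∈ centralizerOrders G, Nat.card G < y * y' := by
  have hcard := card_mul_index (center G)
  have hindex : 0 < (center G).index := Nat.pos_of_ne_zero index_ne_zero_of_finite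
  rcases Multiset.mem_cons.mp hy with rfl | hy
  · obtain ⟨c, hc⟩ := hG
    refine ⟨_, Multiset.mem_cons_of_mem (Multiset.mem_map_of_mem _ (by simpa using hc)), ?_⟩
    rw [← hcard, mul_comm]
    exact Nat.mul_lt_mul_of_pos_left (card_center_lt_centralizerCard hc) hindex
  · obtain ⟨c, hc, rfl⟩ := Multiset.mem_map.mp hy
    refine ⟨_, Multiset.mem_cons_self _ _, ?_⟩
    rw [← hcard]
    exact Nat.mul_lt_mul_of_pos_right (card_center_lt_centralizerCard (by simpa using hc)) hindex

end ClassEquation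

/-- **Theorem A with `n = 1`.** If a finite group `G` has exactly `s ≥ 1`
non-central conjugacy classes, then `|G| < (s+1) · ∏_{i=0}^{s-1} (s+1-i)^(2^(s-1-i))`. -/
theorem card_lt_of_noncentral_classes
    {G : Type*} [Group G] [Finite G] (s : ℕ) (hs : 1 ≤ s)
    (hcl : {C : Set G | ∃ x : G, x ∉ Subgroup.center G ∧ C = conjugatesOf x}.ncard = s) :
    Nat.card G < (s + 1) * ∏ i ∈ Finset.range s, (s + 1 - i) ^ 2 ^ (s - 1 - i) := by
  rw [ncard_setOf_conjugatesOf_notMem_center] at hcl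
  have hcard : Multiset.card (centralizerOrders G) = s + 1 := by
    rw [card_centralizerOrders, hcl]
  obtain ⟨y, hyM, hy⟩ := exists_mem_mul_recipSum_le_card (M := centralizerOrders G)
    (by rintro h; simp [h] at hcard)
  rw [recipSum_centralizerOrders, mul_one, hcard] at hy
  obtain ⟨y', hy'M, hlt⟩ := exists_card_lt_mul_of_mem_centralizerOrders
    (Set.nonempty_of_ncard_ne_zero (by omega)) hyM
  have hy' : y' ≤ landauBound s 1 := le_landauBound_of_mul_recipSum_eq s hcard
    (fun _ => pos_of_mem_centralizerOrders) one_pos (by simp [recipSum_centralizerOrders]) y' hy'M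
  rw [← landauBound_one]
  exact hlt.trans_le (Nat.mul_le_mul (by exact_mod_cast hy) hy')
end
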